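/- arXiv:1301.6321 — 2 statements merged into one kernel-verified Lean document; each statement's English description precedes it below -/
import Mathlib

section
/- (Feedback form of the optimal control.) Assume hypotheses (EC) and (UC). Let τ ∈ [0,T) and 0 ≤ M < M^τ. Then u* is an optimal control to (OP)^{M,τ} if and only if u* ∈ L∞((0,T);H) satisfies u*(t) = M · Bφ*(t)/‖Bφ*(t)‖ for a.e. t ∈ (τ,T), where φ*(t) = U(t−T)(z_d − y(T;χ_{(τ,T)}u*,y₀)); moreover for any optimal control u*, Bφ*(t) ≠ 0 for a.e. t ∈ (τ,T). -/
/-!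
Since `M < M^τ`, no admissible control reaches `z_d`, so `η = z_d - y(T)` is nonzero and, by unique
continuation, `Bφ*(t) = B U(t - T) η` vanishes only on a null set. The reachable set
`{y(T; u) : u ∈ U_{M,τ}}` is convex, so by Kolmogorov's criterion `u*` is optimal iff
`Re ⟪η, y(T; v) - y(T; u*)⟫ ≤ 0` for every admissible `v`. Moving `U` and `B` across the inner
product turns this into `∫_τ^T Re ⟪Bφ*(s), v(s) - u*(s)⟫ ds ≤ 0`, i.e. `u*` maximizes
`∫ Re ⟪Bφ*, ·⟫` over controls bounded by `M`. Pointwise, the unique maximizer of `Re ⟪w, ·⟫` on the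
ball of radius `M` is `M w / ‖w‖` when `w ≠ 0`; testing against this feedback control forces
`u* = M Bφ* / ‖Bφ*‖` almost everywhere.
-/

open MeasureTheory Set Filter Topology

noncomputable section

variable {H : Type*} [NormedAddCommGroup H] [InnerProductSpace ℂ H] [CompleteSpace H]
  [SecondCountableTopology H]

/-- `U` is a strongly continuous one-parameter group of unitary operators on `H`,
abstracting the Schrödinger group `e^{-iΔt}`. -/
def IsUnitaryGroup (U : ℝ → H →L[ℂ] H) : Prop :=
  U 0 = ContinuousLinearMap.id ℂ H ∧
  (∀ s t : ℝ, U (s + t) = (U s).comp (U t)) ∧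
  (∀ (t : ℝ) (x : H), ‖U t x‖ = ‖x‖) ∧
  ∀ x : H, Continuous fun t : ℝ => U t x

/-- `B` is a nonzero orthogonal projection on `H`, abstracting multiplication by `χ_ω`. -/
def IsOrthProj (B : H →L[ℂ] H) : Prop :=
  B ≠ 0 ∧ B.comp B = B ∧ ∀ x y : H, (inner ℂ (B x) y : ℂ) = inner ℂ x (B y)

/-- Membership in `L∞((a,b);H)`. -/
def MemLinfty (u : ℝ → H) (a b : ℝ) : Prop :=
  AEStronglyMeasurable u (volume : Measure ℝ) ∧
    ∃ c : ℝ, ∀ᵐ t : ℝ ∂volume, t ∈ Ioo a b → ‖u t‖ ≤ c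

/-- Membership in `L∞((0,∞);H)`. -/
def MemLinftyInf (u : ℝ → H) : Prop :=
  AEStronglyMeasurable u (volume : Measure ℝ) ∧
    ∃ c : ℝ, ∀ᵐ t : ℝ ∂volume, t ∈ Ioi (0 : ℝ) → ‖u t‖ ≤ c

/-- The `L∞((a,b);H)` norm of `u`. -/
def supNorm (u : ℝ → H) (a b : ℝ) : ℝ :=
  sInf {c : ℝ | 0 ≤ c ∧ ∀ᵐ t : ℝ ∂volume, t ∈ Ioo a b → ‖u t‖ ≤ c}

/-- `stateT U B T τ u y₀ = y(T; χ_{(τ,T)}u, y₀)`, the mild solution at time `T` of the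
controlled Schrödinger equation with initial state `y₀`, the control acting on `(τ,T)`:
`y(T) = U(T)y₀ + ∫_τ^T U(T-s) B u(s) ds`.  The free state at time `t` starting from `y₀`
with control `u` active from time `0` is `stateT U B t 0 u y₀`. -/
def stateT (U : ℝ → H →L[ℂ] H) (B : H →L[ℂ] H) (T τ : ℝ) (u : ℝ → H) (y₀ : H) : H :=
  U T y₀ + ∫ s in Ioo τ T, U (T - s) (B (u s))

/-- Hypothesis (EC): `L∞`-exact controllability with cost. -/
def EC (U : ℝ → H →L[ℂ] H) (B : H →L[ℂ] H) : Prop :=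
  ∀ τ : ℝ, 0 < τ → ∃ C : ℝ, 0 < C ∧ ∀ y₀ z : H, ∃ u : ℝ → H,
    AEStronglyMeasurable u (volume : Measure ℝ) ∧
    (∀ᵐ t : ℝ ∂volume, t ∈ Ioo 0 τ → ‖u t‖ ≤ C * ‖z - U τ y₀‖) ∧
    stateT U B τ 0 u y₀ = z

/-- Hypothesis (UC): unique continuation. -/
def UC (U : ℝ → H →L[ℂ] H) (B : H →L[ℂ] H) : Prop :=
  ∀ η : H, η ≠ 0 → volume {t : ℝ | B (U t η) = 0} = 0

/-- The admissible set `U_M` of the minimal time problem `(TOCP)_M`. -/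
def UMset (U : ℝ → H →L[ℂ] H) (B : H →L[ℂ] H) (y₀ : H) (M : ℝ) : Set (ℝ → H) :=
  {u | MemLinftyInf u ∧ (∀ᵐ t : ℝ ∂volume, t ∈ Ioi (0 : ℝ) → ‖u t‖ ≤ M) ∧
    ∃ s : ℝ, 0 < s ∧ stateT U B s 0 u y₀ = 0}

/-- The minimal time `T_M` of `(TOCP)_M`. -/
def Tmin (U : ℝ → H →L[ℂ] H) (B : H →L[ℂ] H) (y₀ : H) (M : ℝ) : ℝ :=
  sInf {s : ℝ | 0 < s ∧ ∃ u ∈ UMset U B y₀ M, stateT U B s 0 u y₀ = 0}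

/-- The admissible set `V_T` of the minimal norm problem `(NOCP)_T`. -/
def VTset (U : ℝ → H →L[ℂ] H) (B : H →L[ℂ] H) (y₀ : H) (T : ℝ) : Set (ℝ → H) :=
  {v | MemLinfty v 0 T ∧ stateT U B T 0 v y₀ = 0}

/-- The minimal norm `M_T` of `(NOCP)_T`. -/
def Mmin (U : ℝ → H →L[ℂ] H) (B : H →L[ℂ] H) (y₀ : H) (T : ℝ) : ℝ :=
  sInf ((fun v : ℝ → H => supNorm v 0 T) '' VTset U B y₀ T)

/-- Hypothesis (BB): bang-bang property of the minimal time problems. -/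
def BB (U : ℝ → H →L[ℂ] H) (B : H →L[ℂ] H) : Prop :=
  ∀ y₀ : H, y₀ ≠ 0 → ∀ M : ℝ, 0 < M → ∀ u ∈ UMset U B y₀ M,
    stateT U B (Tmin U B y₀ M) 0 u y₀ = 0 →
    ∀ᵐ t : ℝ ∂volume, t ∈ Ioo 0 (Tmin U B y₀ M) → ‖u t‖ = M

/-- Hypothesis (ET): existence of optimal controls for the minimal time problems. -/
def ET (U : ℝ → H →L[ℂ] H) (B : H →L[ℂ] H) : Prop :=
  ∀ y₀ : H, y₀ ≠ 0 → ∀ M : ℝ, 0 < M →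
    ∃ u ∈ UMset U B y₀ M, stateT U B (Tmin U B y₀ M) 0 u y₀ = 0

/-- The admissible set `U_{M,τ}`. -/
def UadmSet (M τ T : ℝ) : Set (ℝ → H) :=
  {u | MemLinfty u 0 T ∧ ∀ᵐ t : ℝ ∂volume, t ∈ Ioo τ T → ‖u t‖ ≤ M}

/-- The optimal distance `r(M,τ)` of the optimal target problem `(OP)^{M,τ}`. -/
def rOP (U : ℝ → H →L[ℂ] H) (B : H →L[ℂ] H) (y₀ z_d : H) (T M τ : ℝ) : ℝ :=
  sInf ((fun u : ℝ → H => ‖stateT U B T τ u y₀ - z_d‖) '' UadmSet M τ T)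

/-- `u` is an optimal control to `(OP)^{M,τ}`. -/
def IsOptOP (U : ℝ → H →L[ℂ] H) (B : H →L[ℂ] H) (y₀ z_d : H) (T M τ : ℝ) (u : ℝ → H) :
    Prop :=
  u ∈ UadmSet M τ T ∧ ‖stateT U B T τ u y₀ - z_d‖ = rOP U B y₀ z_d T M τ

/-- `M^τ`, the minimal norm for exact steering to the target `z_d`. -/
def Mtau (U : ℝ → H →L[ℂ] H) (B : H →L[ℂ] H) (y₀ z_d : H) (T τ : ℝ) : ℝ :=
  sInf ((fun u : ℝ → H => supNorm u τ T) ''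
    {u : ℝ → H | MemLinfty u 0 T ∧ stateT U B T τ u y₀ = z_d})

/-- The admissible set `W_{τ,r}` of the optimal norm problem `(NP)^{τ,r}`. -/
def WadmSet (U : ℝ → H →L[ℂ] H) (B : H →L[ℂ] H) (y₀ z_d : H) (T τ r : ℝ) :
    Set (ℝ → H) :=
  {u | MemLinfty u 0 T ∧ ‖stateT U B T τ u y₀ - z_d‖ ≤ r}

/-- The optimal norm `M(τ,r)` of `(NP)^{τ,r}`. -/
def MNP (U : ℝ → H →L[ℂ] H) (B : H →L[ℂ] H) (y₀ z_d : H) (T τ r : ℝ) : ℝ :=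
  sInf ((fun u : ℝ → H => supNorm u τ T) '' WadmSet U B y₀ z_d T τ r)

/-- `u` is an optimal control to `(NP)^{τ,r}`. -/
def IsOptNP (U : ℝ → H →L[ℂ] H) (B : H →L[ℂ] H) (y₀ z_d : H) (T τ r : ℝ) (u : ℝ → H) :
    Prop :=
  u ∈ WadmSet U B y₀ z_d T τ r ∧ supNorm u τ T = MNP U B y₀ z_d T τ r

/-- The admissible set `V_{M,r}` of the second type optimal time problem `(TP)^{M,r}`. -/
def VadmSet (U : ℝ → H →L[ℂ] H) (B : H →L[ℂ] H) (y₀ z_d : H) (T M r : ℝ) :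
    Set (ℝ → H) :=
  {u | ∃ τ : ℝ, τ ∈ Ico (0 : ℝ) T ∧ u ∈ UadmSet M τ T ∧
    ‖stateT U B T τ u y₀ - z_d‖ ≤ r}

/-- `τ_{M,r}(u)`. -/
def tauOf (U : ℝ → H →L[ℂ] H) (B : H →L[ℂ] H) (y₀ z_d : H) (T r : ℝ) (u : ℝ → H) : ℝ :=
  sSup {τ : ℝ | τ ∈ Ico (0 : ℝ) T ∧ ‖stateT U B T τ u y₀ - z_d‖ ≤ r}

/-- The optimal time `τ(M,r)` of `(TP)^{M,r}`. -/
def tauTP (U : ℝ → H →L[ℂ] H) (B : H →L[ℂ] H) (y₀ z_d : H) (T M r : ℝ) : ℝ :=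
  sSup (tauOf U B y₀ z_d T r '' VadmSet U B y₀ z_d T M r)

/-- `u` is an optimal control to `(TP)^{M,r}`. -/
def IsOptTP (U : ℝ → H →L[ℂ] H) (B : H →L[ℂ] H) (y₀ z_d : H) (T M r : ℝ) (u : ℝ → H) :
    Prop :=
  u ∈ VadmSet U B y₀ z_d T M r ∧
    ‖stateT U B T (tauTP U B y₀ z_d T M r) u y₀ - z_d‖ ≤ r

/-- The adjoint state `φ*(t) = U(t-T)(z_d - y(T; χ_{(τ,T)}u, y₀))`. -/
def adjState (U : ℝ → H →L[ℂ] H) (B : H →L[ℂ] H) (y₀ z_d : H) (T τ : ℝ) (u : ℝ → H)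
    (t : ℝ) : H :=
  U (t - T) (z_d - stateT U B T τ u y₀)

section InnerProductSpace

variable {E : Type*} [NormedAddCommGroup E] [InnerProductSpace ℂ E]

theorem norm_sub_eq_iInf_iff_re_inner_le_zero {K : Set E} (hK : Convex ℝ K) {u v : E}
    (hv : v ∈ K) :
    ‖u - v‖ = ⨅ w : K, ‖u - w‖ ↔ ∀ w ∈ K, RCLike.re (inner ℂ (u - v) (w - v)) ≤ 0 := by
  -- Mathlib states the criterion over `ℝ`; the inner product of `complexToReal` is `re ⟪·, ·⟫_ℂ`.
  let := InnerProductSpace.complexToReal (G := E)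
  exact norm_eq_iInf_iff_real_inner_le_zero hK hv

theorem norm_div_norm_smul_le {M : ℝ} (hM : 0 ≤ M) (w : E) : ‖(M / ‖w‖) • w‖ ≤ M := by
  rcases eq_or_ne w 0 with rfl | hw
  · simpa using hM
  · rw [norm_smul, Real.norm_of_nonneg (by positivity),
      div_mul_cancel₀ _ (norm_ne_zero_iff.2 hw)]

theorem re_inner_div_norm_smul_self (M : ℝ) (w : E) :
    RCLike.re (inner ℂ w ((M / ‖w‖) • w)) = M * ‖w‖ := by
  rcases eq_or_ne w 0 with rfl | hw
  · simp
  · rw [RCLike.real_smul_eq_coe_smul (K := ℂ), inner_smul_right, RCLike.re_ofReal_mul,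
      inner_self_eq_norm_sq]
    field_simp

theorem re_inner_le_of_norm_le {M : ℝ} (w : E) {x : E} (hx : ‖x‖ ≤ M) :
    RCLike.re (inner ℂ w x) ≤ M * ‖w‖ :=
  (re_inner_le_norm w x).trans (by rw [mul_comm]; gcongr)

theorem eq_div_norm_smul_of_re_inner_eq {M : ℝ} {w x : E} (hw : w ≠ 0) (hx : ‖x‖ ≤ M)
    (h : RCLike.re (inner ℂ w x) = M * ‖w‖) : x = (M / ‖w‖) • w := by
  have hw' : 0 < ‖w‖ := norm_pos_iff.2 hw
  have hxM : ‖x‖ = M := by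
    have := re_inner_le_norm (𝕜 := ℂ) w x
    nlinarith [norm_nonneg x]
  have hfeedback : ‖(M / ‖w‖) • w‖ = M := by
    rw [norm_smul, Real.norm_of_nonneg (div_nonneg (hxM ▸ norm_nonneg x) hw'.le),
      div_mul_cancel₀ _ hw'.ne']
  have hre : RCLike.re (inner ℂ x ((M / ‖w‖) • w)) = M ^ 2 := by
    rw [RCLike.real_smul_eq_coe_smul (K := ℂ), inner_smul_right, RCLike.re_ofReal_mul,
      inner_re_symm, h]
    field_simp
  have hsq : ‖x - (M / ‖w‖) • w‖ ^ 2 = 0 := by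
    rw [norm_sub_sq (𝕜 := ℂ), hre, hxM, hfeedback]
    ring
  rwa [sq_eq_zero_iff, norm_sub_eq_zero_iff] at hsq

theorem norm_smul_add_smul_le {a b c : ℝ} (ha : 0 ≤ a) (hb : 0 ≤ b) (hab : a + b = 1)
    {x y : E} (hx : ‖x‖ ≤ c) (hy : ‖y‖ ≤ c) : ‖a • x + b • y‖ ≤ c :=
  mem_closedBall_zero_iff.1 <| convex_closedBall (0 : E) c
    (mem_closedBall_zero_iff.2 hx) (mem_closedBall_zero_iff.2 hy) ha hb hab

end InnerProductSpace

section MaximumPrinciple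

variable {α E : Type*} [MeasurableSpace α] {μ : Measure α} [NormedAddCommGroup E]
  [InnerProductSpace ℂ E] {M : ℝ} {g u v : α → E}

theorem integral_re_inner_sub_nonpos (hu : ∀ᵐ x ∂μ, u x = (M / ‖g x‖) • g x)
    (hv : ∀ᵐ x ∂μ, ‖v x‖ ≤ M) : ∫ x, RCLike.re (inner ℂ (g x) (v x - u x)) ∂μ ≤ 0 := by
  refine integral_nonpos_of_ae ?_
  filter_upwards [hu, hv] with x hux hvx
  rw [Pi.zero_apply, inner_sub_right, map_sub, hux, re_inner_div_norm_smul_self, sub_nonpos]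
  exact re_inner_le_of_norm_le _ hvx

theorem ae_eq_div_norm_smul_of_integral_re_inner_nonpos (hg : ∀ᵐ x ∂μ, g x ≠ 0)
    (hu : ∀ᵐ x ∂μ, ‖u x‖ ≤ M)
    (hint : Integrable (fun x => RCLike.re (inner ℂ (g x) ((M / ‖g x‖) • g x - u x))) μ)
    (h : ∫ x, RCLike.re (inner ℂ (g x) ((M / ‖g x‖) • g x - u x)) ∂μ ≤ 0) :
    u =ᵐ[μ] fun x => (M / ‖g x‖) • g x := by
  have hnonneg : 0 ≤ᵐ[μ] fun x => RCLike.re (inner ℂ (g x) ((M / ‖g x‖) • g x - u x)) := by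
    filter_upwards [hu] with x hux
    rw [Pi.zero_apply, inner_sub_right, map_sub, re_inner_div_norm_smul_self, sub_nonneg]
    exact re_inner_le_of_norm_le _ hux
  have hzero := (integral_eq_zero_iff_of_nonneg_ae hnonneg hint).1
    (le_antisymm h (integral_nonneg_of_ae hnonneg))
  filter_upwards [hg, hu, hzero] with x hgx hux hzx
  rw [Pi.zero_apply, inner_sub_right, map_sub, re_inner_div_norm_smul_self, sub_eq_zero] at hzx
  exact eq_div_norm_smul_of_re_inner_eq hgx hux hzx.symm

end MaximumPrinciple

namespace IsUnitaryGroup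

variable {E : Type*} [NormedAddCommGroup E] [InnerProductSpace ℂ E] {U : ℝ → E →L[ℂ] E}
  {B : E →L[ℂ] E}

def linearIsometry (hU : IsUnitaryGroup U) (t : ℝ) : E →ₗᵢ[ℂ] E :=
  ⟨(U t).toLinearMap, hU.2.2.1 t⟩

theorem apply_apply_neg (hU : IsUnitaryGroup U) (t : ℝ) (x : E) : U t (U (-t) x) = x := by
  have h := hU.2.1 t (-t)
  rw [add_neg_cancel, hU.1] at h
  exact (DFunLike.congr_fun h x).symm

theorem inner_apply_right (hU : IsUnitaryGroup U) (t : ℝ) (η x : E) :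
    inner ℂ η (U t x) = inner ℂ (U (-t) η) x := by
  conv_lhs => rw [← hU.apply_apply_neg t η]
  exact (hU.linearIsometry t).inner_map_map _ _

theorem continuous_uncurry (hU : IsUnitaryGroup U) : Continuous fun p : ℝ × E => U p.1 p.2 :=
  continuous_prod_of_continuous_lipschitzWith' _ 1 (fun t => (hU.linearIsometry t).lipschitz)
    hU.2.2.2

theorem integrableOn_stateT_integrand (hU : IsUnitaryGroup U) {w : ℝ → E} {τ T c : ℝ}
    (hw : AEStronglyMeasurable w) (hc : ∀ᵐ t ∂volume, t ∈ Ioo τ T → ‖w t‖ ≤ c) :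
    IntegrableOn (fun s => U (T - s) (B (w s))) (Ioo τ T) := by
  have hmeas : AEStronglyMeasurable (fun s => U (T - s) (B (w s))) :=
    hU.continuous_uncurry.comp_aestronglyMeasurable
      ((continuous_const.sub continuous_id).aestronglyMeasurable.prodMk
        (B.continuous.comp_aestronglyMeasurable hw))
  refine Measure.integrableOn_of_bounded measure_Ioo_lt_top.ne hmeas (M := ‖B‖ * c) ?_
  rw [ae_restrict_iff' measurableSet_Ioo]
  filter_upwards [hc] with s hs hmem
  rw [hU.2.2.1]
  exact (B.le_opNorm _).trans (by gcongr; exact hs hmem)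

theorem inner_apply_sub (hU : IsUnitaryGroup U) (hB : IsOrthProj B) (η x : E) (s T : ℝ) :
    inner ℂ η (U (T - s) (B x)) = inner ℂ (B (U (s - T) η)) x := by
  rw [hU.inner_apply_right, neg_sub, hB.2.2]

end IsUnitaryGroup

section OptimalTarget

variable {E : Type*} [NormedAddCommGroup E] [InnerProductSpace ℂ E] {U : ℝ → E →L[ℂ] E}
  {B : E →L[ℂ] E} {T τ M : ℝ} {y₀ z_d : E} {u v : ℝ → E}

theorem convex_UadmSet (M τ T : ℝ) : Convex ℝ (UadmSet (H := E) M τ T) := by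
  intro u hu v hv a b ha hb hab
  obtain ⟨⟨hu_meas, cu, hcu⟩, huM⟩ := hu
  obtain ⟨⟨hv_meas, cv, hcv⟩, hvM⟩ := hv
  refine ⟨⟨(hu_meas.const_smul a).add (hv_meas.const_smul b), max cu cv, ?_⟩, ?_⟩
  · filter_upwards [hcu, hcv] with t hut hvt ht
    exact norm_smul_add_smul_le ha hb hab ((hut ht).trans (le_max_left _ _))
      ((hvt ht).trans (le_max_right _ _))
  · filter_upwards [huM, hvM] with t hut hvt ht
    exact norm_smul_add_smul_le ha hb hab (hut ht) (hvt ht)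

theorem integrableOn_stateT_integrand_of_mem_UadmSet (hU : IsUnitaryGroup U)
    (hu : u ∈ UadmSet M τ T) : IntegrableOn (fun s => U (T - s) (B (u s))) (Ioo τ T) :=
  hU.integrableOn_stateT_integrand hu.1.1 hu.2

theorem stateT_smul_add_smul (hu : IntegrableOn (fun s => U (T - s) (B (u s))) (Ioo τ T))
    (hv : IntegrableOn (fun s => U (T - s) (B (v s))) (Ioo τ T)) {a b : ℝ} (hab : a + b = 1) :
    stateT U B T τ (a • u + b • v) y₀ = a • stateT U B T τ u y₀ + b • stateT U B T τ v y₀ := by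
  obtain rfl : b = 1 - a := by linarith
  simp only [stateT, Pi.add_apply, Pi.smul_apply, map_add, ContinuousLinearMap.map_smul_of_tower]
  rw [integral_add (f := fun s => a • U (T - s) (B (u s)))
    (g := fun s => (1 - a) • U (T - s) (B (v s))) (hu.smul a) (hv.smul (1 - a)),
    integral_smul, integral_smul]
  module

theorem convex_image_stateT_UadmSet (hU : IsUnitaryGroup U) :
    Convex ℝ ((fun u => stateT U B T τ u y₀) '' UadmSet M τ T) := by
  rintro _ ⟨u, hu, rfl⟩ _ ⟨v, hv, rfl⟩ a b ha hb hab
  exact ⟨a • u + b • v, convex_UadmSet M τ T hu hv ha hb hab,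
    stateT_smul_add_smul (integrableOn_stateT_integrand_of_mem_UadmSet hU hu)
      (integrableOn_stateT_integrand_of_mem_UadmSet hU hv) hab⟩

theorem integrableOn_stateT_integrand_sub (hU : IsUnitaryGroup U) (hu : u ∈ UadmSet M τ T)
    (hv : v ∈ UadmSet M τ T) :
    IntegrableOn (fun s => U (T - s) (B (v s - u s))) (Ioo τ T) := by
  have hu' := integrableOn_stateT_integrand_of_mem_UadmSet (B := B) hU hu
  have hv' := integrableOn_stateT_integrand_of_mem_UadmSet (B := B) hU hv
  refine (hv'.sub hu').congr_fun (fun s _ => ?_) measurableSet_Ioo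
  simp only [Pi.sub_apply, map_sub]

theorem stateT_sub_stateT (hU : IsUnitaryGroup U) (hu : u ∈ UadmSet M τ T)
    (hv : v ∈ UadmSet M τ T) :
    stateT U B T τ v y₀ - stateT U B T τ u y₀ = ∫ s in Ioo τ T, U (T - s) (B (v s - u s)) := by
  simp only [stateT, map_sub]
  rw [integral_sub (integrableOn_stateT_integrand_of_mem_UadmSet hU hv)
    (integrableOn_stateT_integrand_of_mem_UadmSet hU hu)]
  abel

theorem integrableOn_re_inner_sub (hU : IsUnitaryGroup U) (hB : IsOrthProj B)
    (hu : u ∈ UadmSet M τ T) (hv : v ∈ UadmSet M τ T) (η : E) :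
    IntegrableOn (fun s => RCLike.re (inner ℂ (B (U (s - T) η)) (v s - u s))) (Ioo τ T) := by
  rw [IntegrableOn]
  simpa only [hU.inner_apply_sub hB] using
    ((integrableOn_stateT_integrand_sub (B := B) hU hu hv).const_inner (𝕜 := ℂ) η).re

theorem re_inner_stateT_sub_stateT [CompleteSpace E] (hU : IsUnitaryGroup U)
    (hB : IsOrthProj B) (hu : u ∈ UadmSet M τ T) (hv : v ∈ UadmSet M τ T) (η : E) :
    RCLike.re (inner ℂ η (stateT U B T τ v y₀ - stateT U B T τ u y₀))
      = ∫ s in Ioo τ T, RCLike.re (inner ℂ (B (U (s - T) η)) (v s - u s)) := by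
  have hint := integrableOn_stateT_integrand_sub (B := B) hU hu hv
  rw [stateT_sub_stateT hU hu hv, ← integral_inner hint,
    ← integral_re (hint.const_inner (𝕜 := ℂ) η)]
  simp only [hU.inner_apply_sub hB]

theorem rOP_eq_iInf :
    rOP U B y₀ z_d T M τ = ⨅ w : (fun u => stateT U B T τ u y₀) '' UadmSet M τ T, ‖z_d - w‖ := by
  rw [rOP, ← sInf_image' (f := fun w => ‖z_d - w‖), image_image]
  simp only [norm_sub_rev]

theorem isOptOP_iff_forall_integral_le [CompleteSpace E] (hU : IsUnitaryGroup U)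
    (hB : IsOrthProj B) (hu : u ∈ UadmSet M τ T) :
    IsOptOP U B y₀ z_d T M τ u ↔ ∀ v ∈ UadmSet M τ T,
      ∫ s in Ioo τ T, RCLike.re (inner ℂ (B (adjState U B y₀ z_d T τ u s)) (v s - u s)) ≤ 0 := by
  rw [IsOptOP, and_iff_right hu, rOP_eq_iInf, norm_sub_rev,
    norm_sub_eq_iInf_iff_re_inner_le_zero (convex_image_stateT_UadmSet hU)
      (mem_image_of_mem _ hu), forall_mem_image]
  refine forall₂_congr fun v hv => ?_
  rw [re_inner_stateT_sub_stateT hU hB hu hv]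
  rfl

end OptimalTarget

section Feedback

variable {E : Type*} [NormedAddCommGroup E] [InnerProductSpace ℂ E] {U : ℝ → E →L[ℂ] E}
  {B : E →L[ℂ] E} {T τ M : ℝ} {y₀ z_d : E} {u : ℝ → E}

theorem stateT_ne_of_lt_Mtau (hM : 0 ≤ M) (hMlt : M < Mtau U B y₀ z_d T τ)
    (hu : u ∈ UadmSet M τ T) : stateT U B T τ u y₀ ≠ z_d := by
  intro hreach
  have hnorm : supNorm u τ T ≤ M := csInf_le ⟨0, fun c hc => hc.1⟩ ⟨hM, hu.2⟩
  have hMtau : Mtau U B y₀ z_d T τ ≤ supNorm u τ T :=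
    csInf_le ⟨0, by rintro _ ⟨v, -, rfl⟩; exact Real.sInf_nonneg fun c hc => hc.1⟩
      ⟨u, ⟨hu.1, hreach⟩, rfl⟩
  linarith

theorem UC.ae_apply_sub_ne_zero (hUC : UC U B) (T : ℝ) {η : E} (hη : η ≠ 0) :
    ∀ᵐ t, B (U (t - T) η) ≠ 0 :=
  measure_eq_zero_iff_ae_notMem.1 <|
    (measurePreserving_sub_right volume T).quasiMeasurePreserving.preimage_null (hUC η hη)

theorem continuous_adjState (hU : IsUnitaryGroup U) :
    Continuous (adjState U B y₀ z_d T τ u) :=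
  (hU.2.2.2 _).comp (continuous_id.sub continuous_const)

theorem div_norm_smul_mem_UadmSet (hM : 0 ≤ M) {g : ℝ → E} (hg : AEStronglyMeasurable g) :
    (fun t => (M / ‖g t‖) • g t) ∈ UadmSet M τ T :=
  ⟨⟨(hg.norm.aemeasurable.const_div M).aestronglyMeasurable.smul hg, M,
    ae_of_all _ fun t _ => norm_div_norm_smul_le hM (g t)⟩,
    ae_of_all _ fun t _ => norm_div_norm_smul_le hM (g t)⟩

end Feedback

theorem op_feedback_form_general
    (U : ℝ → H →L[ℂ] H) (B : H →L[ℂ] H) (hU : IsUnitaryGroup U) (hB : IsOrthProj B)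
    (hUC : UC U B)
    (T : ℝ) (y₀ z_d : H)
    (τ M : ℝ) (hM : 0 ≤ M) (hMlt : M < Mtau U B y₀ z_d T τ) :
    (∀ u : ℝ → H, IsOptOP U B y₀ z_d T M τ u ↔
      MemLinfty u 0 T ∧ ∀ᵐ t : ℝ ∂volume, t ∈ Ioo τ T →
        u t = (M / ‖B (adjState U B y₀ z_d T τ u t)‖) • B (adjState U B y₀ z_d T τ u t)) ∧
    (∀ u : ℝ → H, IsOptOP U B y₀ z_d T M τ u →
      ∀ᵐ t : ℝ ∂volume, t ∈ Ioo τ T → B (adjState U B y₀ z_d T τ u t) ≠ 0) := by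
  have hIoo {p : ℝ → Prop} : (∀ᵐ t ∂volume.restrict (Ioo τ T), p t) ↔ ∀ᵐ t, t ∈ Ioo τ T → p t :=
    ae_restrict_iff' measurableSet_Ioo
  have hfeedback (u : ℝ → H) : (fun t => (M / ‖B (adjState U B y₀ z_d T τ u t)‖) •
      B (adjState U B y₀ z_d T τ u t)) ∈ UadmSet M τ T :=
    div_norm_smul_mem_UadmSet hM (B.continuous.comp (continuous_adjState hU)).aestronglyMeasurable
  have hnonzero (u : ℝ → H) (hu : u ∈ UadmSet M τ T) :
      ∀ᵐ t ∂volume.restrict (Ioo τ T), B (adjState U B y₀ z_d T τ u t) ≠ 0 :=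
    ae_restrict_of_ae <| hUC.ae_apply_sub_ne_zero T <|
      sub_ne_zero.2 (stateT_ne_of_lt_Mtau hM hMlt hu).symm
  refine ⟨fun u => ⟨fun hu => ⟨hu.1.1, hIoo.1 ?_⟩, fun ⟨hmem, hform⟩ => ?_⟩,
    fun u hu => hIoo.1 (hnonzero u hu.1)⟩
  · have hvar := (isOptOP_iff_forall_integral_le hU hB hu.1).1 hu _ (hfeedback u)
    exact ae_eq_div_norm_smul_of_integral_re_inner_nonpos (hnonzero u hu.1) (hIoo.2 hu.1.2)
      (integrableOn_re_inner_sub hU hB hu.1 (hfeedback u) _) hvar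
  · have hu : u ∈ UadmSet M τ T :=
      ⟨hmem, hform.mono fun t ht hIoo_t => (ht hIoo_t).symm ▸ norm_div_norm_smul_le hM _⟩
    exact (isOptOP_iff_forall_integral_le hU hB hu).2 fun v hv =>
      integral_re_inner_sub_nonpos (hIoo.2 hform) (hIoo.2 hv.2)

theorem op_feedback_form
    (U : ℝ → H →L[ℂ] H) (B : H →L[ℂ] H) (hU : IsUnitaryGroup U) (hB : IsOrthProj B)
    (hEC : EC U B) (hECrev : EC (fun t => U (-t)) B)
    (hUC : UC U B)
    (T : ℝ) (hT : 0 < T) (y₀ z_d : H) (hrT : 0 < ‖U T y₀ - z_d‖)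
    (τ M : ℝ) (hτ : τ ∈ Ico (0 : ℝ) T) (hM : 0 ≤ M) (hMlt : M < Mtau U B y₀ z_d T τ) :
    (∀ u : ℝ → H, IsOptOP U B y₀ z_d T M τ u ↔
      MemLinfty u 0 T ∧ ∀ᵐ t : ℝ ∂volume, t ∈ Ioo τ T →
        u t = (M / ‖B (adjState U B y₀ z_d T τ u t)‖) • B (adjState U B y₀ z_d T τ u t)) ∧
    (∀ u : ℝ → H, IsOptOP U B y₀ z_d T M τ u →
      ∀ᵐ t : ℝ ∂volume, t ∈ Ioo τ T → B (adjState U B y₀ z_d T τ u t) ≠ 0) :=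
  op_feedback_form_general U B hU hB hUC T y₀ z_d τ M hM hMlt
end
end

section
/- Assume hypotheses (EC) and (UC). Let τ ∈ [0,T). Then the map M ↦ r(M,τ) sends [0,M^τ) into (0,r_T], is strictly monotonically decreasing, is Lipschitz continuous with |r(M₁,τ) − r(M₂,τ)| ≤ (T−τ)|M₁−M₂| for all M₁,M₂ ∈ [0,M^τ), and satisfies r(0,τ) = r_T and lim_{M→M^τ} r(M,τ) = 0. -/
/-!
By (EC), shifted in time to `(τ,T)`, a correction `z` of the final state costs at most `C‖z‖`
of additional control. Correcting the whole error shows `M^τ ≤ M + C r(M,τ)`, so `r(M,τ) > 0`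
below `M^τ`; correcting the fraction `δ / (C d)` of an error `d` shows
`r(M + δ,τ) + δ / C ≤ r(M,τ)` whenever `r(M + δ,τ) > 0`, which gives strict monotonicity.
Scaling a control by `M₂ / M₁` moves the final state by at most `(T - τ)(M₁ - M₂)`: this is the
Lipschitz bound, and applied to exact controls of norm just above `M^τ` it gives
`r(M,τ) ≤ (T - τ)(M^τ - M)`, hence the limit at `M^τ` and, at `M = 0`, `M^τ > 0`.
-/

open MeasureTheory Set Filter Topology

noncomputable section

variable {H : Type*} [NormedAddCommGroup H] [InnerProductSpace ℂ H] [CompleteSpace H]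
  [SecondCountableTopology H]

section InputMap

variable {E : Type*} [NormedAddCommGroup E] [InnerProductSpace ℂ E]
  {U : ℝ → E →L[ℂ] E} {B : E →L[ℂ] E} {T τ : ℝ}

lemma IsOrthProj.norm_apply_le (hB : IsOrthProj B) (x : E) : ‖B x‖ ≤ ‖x‖ := by
  have h : ‖B x‖ ^ 2 ≤ ‖x‖ * ‖B x‖ :=
    calc ‖B x‖ ^ 2 = RCLike.re (inner ℂ (B x) (B x)) := (inner_self_eq_norm_sq _).symm
      _ = RCLike.re (inner ℂ x (B x)) := by
        rw [hB.2.2, ← ContinuousLinearMap.comp_apply, hB.2.1]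
      _ ≤ ‖x‖ * ‖B x‖ := re_inner_le_norm _ _
  nlinarith [norm_nonneg x, norm_nonneg (B x)]

lemma IsUnitaryGroup.continuous_uncurry_s10 (hU : IsUnitaryGroup U) :
    Continuous fun p : ℝ × E => U p.1 p.2 :=
  continuous_prod_of_continuous_lipschitzWith' _ 1
    (fun t => LipschitzWith.of_dist_le_mul fun x y => by
      simp [dist_eq_norm, ← map_sub, hU.2.2.1])
    hU.2.2.2

def inputMap (U : ℝ → E →L[ℂ] E) (B : E →L[ℂ] E) (T τ : ℝ) (u : ℝ → E) : E :=
  ∫ s in Ioo τ T, U (T - s) (B (u s))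

lemma stateT_eq_add_inputMap (u : ℝ → E) (y₀ : E) :
    stateT U B T τ u y₀ = U T y₀ + inputMap U B T τ u :=
  rfl

lemma norm_inputIntegrand_le (hU : IsUnitaryGroup U) (hB : IsOrthProj B) (u : ℝ → E) (s : ℝ) :
    ‖U (T - s) (B (u s))‖ ≤ ‖u s‖ :=
  (hU.2.2.1 _ _).trans_le (hB.norm_apply_le _)

lemma integrableOn_inputIntegrand (hU : IsUnitaryGroup U) (hB : IsOrthProj B) {u : ℝ → E}
    {c : ℝ} (hu : AEStronglyMeasurable u volume) (hc : ∀ᵐ t, t ∈ Ioo τ T → ‖u t‖ ≤ c) :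
    IntegrableOn (fun s => U (T - s) (B (u s))) (Ioo τ T) := by
  have hmeas : AEStronglyMeasurable (fun s => U (T - s) (B (u s))) volume :=
    hU.continuous_uncurry_s10.comp_aestronglyMeasurable
      ((continuous_const.sub continuous_id).aestronglyMeasurable.prodMk
        (B.continuous.comp_aestronglyMeasurable hu))
  refine .of_bound measure_Ioo_lt_top hmeas.restrict c ?_
  rw [ae_restrict_iff' measurableSet_Ioo]
  filter_upwards [hc] with t ht hmem using (norm_inputIntegrand_le hU hB u t).trans (ht hmem)

lemma norm_inputMap_le (hU : IsUnitaryGroup U) (hB : IsOrthProj B) (hτT : τ ≤ T) {u : ℝ → E}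
    {c : ℝ} (hc : ∀ᵐ t, t ∈ Ioo τ T → ‖u t‖ ≤ c) :
    ‖inputMap U B T τ u‖ ≤ (T - τ) * c := by
  have h := norm_setIntegral_le_of_norm_le_const_ae' (f := fun s => U (T - s) (B (u s)))
    measure_Ioo_lt_top (hc.mono fun t ht hmem => (norm_inputIntegrand_le hU hB u t).trans (ht hmem))
  rwa [measureReal_def, Real.volume_Ioo, ENNReal.toReal_ofReal (sub_nonneg.2 hτT),
    mul_comm] at h

lemma inputMap_add {u w : ℝ → E}
    (hu : IntegrableOn (fun s => U (T - s) (B (u s))) (Ioo τ T))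
    (hw : IntegrableOn (fun s => U (T - s) (B (w s))) (Ioo τ T)) :
    inputMap U B T τ (u + w) = inputMap U B T τ u + inputMap U B T τ w := by
  simp only [inputMap, Pi.add_apply, map_add]
  exact integral_add hu hw

lemma inputMap_smul (c : ℝ) (u : ℝ → E) :
    inputMap U B T τ (c • u) = c • inputMap U B T τ u := by
  simp only [inputMap, Pi.smul_apply, ContinuousLinearMap.map_smul_of_tower]
  exact integral_smul c _

lemma inputMap_zero : inputMap U B T τ (0 : ℝ → E) = 0 := by
  simp [inputMap]

-- The bound on `w` holds on all of `ℝ`, so `w` can be added to any control in `L∞((0,T);E)`.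
def IsControlCost (U : ℝ → E →L[ℂ] E) (B : E →L[ℂ] E) (T τ C : ℝ) : Prop :=
  ∀ z : E, ∃ w : ℝ → E, AEStronglyMeasurable w volume ∧ (∀ᵐ t, ‖w t‖ ≤ C * ‖z‖) ∧
    inputMap U B T τ w = z

lemma EC.exists_isControlCost (hEC : EC U B) (hτT : τ < T) :
    ∃ C, 0 < C ∧ IsControlCost U B T τ C := by
  obtain ⟨C, hC, hsteer⟩ := hEC (T - τ) (sub_pos.2 hτT)
  refine ⟨C, hC, fun z => ?_⟩
  obtain ⟨v, hv, hvC, hvz⟩ := hsteer 0 z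
  have hshift := (measurePreserving_sub_right volume τ).quasiMeasurePreserving
  refine ⟨(Ioo τ T).indicator fun t => v (t - τ),
    (hv.comp_quasiMeasurePreserving hshift).indicator measurableSet_Ioo, ?_, ?_⟩
  · filter_upwards [hshift.ae hvC] with t ht
    by_cases hmem : t ∈ Ioo τ T
    · rw [indicator_of_mem hmem]
      simpa using ht ⟨sub_pos.2 hmem.1, sub_lt_sub_right hmem.2 τ⟩
    · rw [indicator_of_notMem hmem, norm_zero]
      positivity
  · have hvz : ∫ s in Ioo 0 (T - τ), U (T - τ - s) (B (v s)) = z := by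
      simpa [stateT] using hvz
    calc inputMap U B T τ ((Ioo τ T).indicator fun t => v (t - τ))
        = ∫ s in Ioo τ T, U (T - τ - (s - τ)) (B (v (s - τ))) :=
          setIntegral_congr_fun measurableSet_Ioo fun s hs => by
            simp [indicator_of_mem hs]
      _ = ∫ s in 0..T - τ, U (T - τ - s) (B (v s)) := by
          have h := intervalIntegral.integral_comp_sub_right (a := τ) (b := T)
            (fun s => U (T - τ - s) (B (v s))) τ
          rw [sub_self, intervalIntegral.integral_of_le hτT.le,
            integral_Ioc_eq_integral_Ioo] at h
          exact h
      _ = z := by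
          rw [intervalIntegral.integral_of_le (sub_nonneg.2 hτT.le),
            integral_Ioc_eq_integral_Ioo, hvz]

end InputMap

section AdmissibleControls

variable {E : Type*} [NormedAddCommGroup E] {T τ M M₁ M₂ : ℝ} {u : ℝ → E}

lemma supNorm_nonneg {a b : ℝ} : 0 ≤ supNorm u a b :=
  Real.sInf_nonneg fun _ hc => hc.1

lemma supNorm_le {a b c : ℝ} (hc : 0 ≤ c) (h : ∀ᵐ t, t ∈ Ioo a b → ‖u t‖ ≤ c) :
    supNorm u a b ≤ c :=
  csInf_le ⟨0, fun _ hx => hx.1⟩ ⟨hc, h⟩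

lemma UadmSet_mono (h : M₁ ≤ M₂) : (UadmSet M₁ τ T : Set (ℝ → E)) ⊆ UadmSet M₂ τ T :=
  fun _ hu => ⟨hu.1, hu.2.mono fun _ ht hmem => (ht hmem).trans h⟩

lemma zero_mem_UadmSet (hM : 0 ≤ M) : (0 : ℝ → E) ∈ UadmSet M τ T :=
  ⟨⟨aestronglyMeasurable_const, 0, by simp⟩, by simp [hM]⟩

lemma smul_mem_UadmSet [NormedSpace ℝ E] {c : ℝ} (hc : 0 ≤ c) (hu : u ∈ UadmSet M τ T) :
    c • u ∈ UadmSet (c * M) τ T := by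
  obtain ⟨⟨hmeas, K, hK⟩, hM⟩ := hu
  refine ⟨⟨hmeas.const_smul c, c * K, ?_⟩, ?_⟩
  · filter_upwards [hK] with t ht hmem
    simpa [norm_smul, abs_of_nonneg hc] using mul_le_mul_of_nonneg_left (ht hmem) hc
  · filter_upwards [hM] with t ht hmem
    simpa [norm_smul, abs_of_nonneg hc] using mul_le_mul_of_nonneg_left (ht hmem) hc

lemma add_mem_UadmSet {w : ℝ → E} {K : ℝ} (hu : u ∈ UadmSet M τ T)
    (hw : AEStronglyMeasurable w volume) (hwK : ∀ᵐ t, ‖w t‖ ≤ K) :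
    u + w ∈ UadmSet (M + K) τ T := by
  obtain ⟨⟨hmeas, c, hc⟩, hM⟩ := hu
  refine ⟨⟨hmeas.add hw, c + K, ?_⟩, ?_⟩
  · filter_upwards [hc, hwK] with t ht hwt hmem
    exact (norm_add_le _ _).trans (add_le_add (ht hmem) hwt)
  · filter_upwards [hM, hwK] with t ht hwt hmem
    exact (norm_add_le _ _).trans (add_le_add (ht hmem) hwt)

lemma mem_UadmSet_of_supNorm_lt {N : ℝ} (hτ : 0 ≤ τ) (hu : MemLinfty u 0 T)
    (h : supNorm u τ T < N) : u ∈ UadmSet N τ T := by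
  obtain ⟨hmeas, c, hc⟩ := hu
  have hne : {c : ℝ | 0 ≤ c ∧ ∀ᵐ t, t ∈ Ioo τ T → ‖u t‖ ≤ c}.Nonempty :=
    ⟨max c 0, le_max_right _ _, hc.mono fun t ht hmem =>
      (ht (Ioo_subset_Ioo_left hτ hmem)).trans (le_max_left _ _)⟩
  obtain ⟨c', ⟨-, hc'⟩, hc'N⟩ := exists_lt_of_csInf_lt hne h
  exact ⟨⟨hmeas, c, hc⟩, hc'.mono fun t ht hmem => (ht hmem).trans hc'N.le⟩

end AdmissibleControls

section OptimalTarget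

variable {E : Type*} [NormedAddCommGroup E] [InnerProductSpace ℂ E]
  {U : ℝ → E →L[ℂ] E} {B : E →L[ℂ] E} {y₀ z_d : E} {T τ M M₁ M₂ C : ℝ} {u : ℝ → E}

lemma rOP_le (hu : u ∈ UadmSet M τ T) :
    rOP U B y₀ z_d T M τ ≤ ‖stateT U B T τ u y₀ - z_d‖ :=
  csInf_le ⟨0, by rintro _ ⟨v, -, rfl⟩; positivity⟩ ⟨u, hu, rfl⟩

lemma le_rOP {a : ℝ} (hM : 0 ≤ M)
    (h : ∀ u ∈ UadmSet M τ T, a ≤ ‖stateT U B T τ u y₀ - z_d‖) :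
    a ≤ rOP U B y₀ z_d T M τ :=
  le_csInf ⟨_, 0, zero_mem_UadmSet hM, rfl⟩ (by rintro _ ⟨u, hu, rfl⟩; exact h u hu)

lemma rOP_nonneg : 0 ≤ rOP U B y₀ z_d T M τ :=
  Real.sInf_nonneg (by rintro _ ⟨u, -, rfl⟩; positivity)

lemma rOP_anti (hM₁ : 0 ≤ M₁) (h : M₁ ≤ M₂) :
    rOP U B y₀ z_d T M₂ τ ≤ rOP U B y₀ z_d T M₁ τ :=
  le_rOP hM₁ fun _ hu => rOP_le (UadmSet_mono h hu)

lemma rOP_le_norm (hM : 0 ≤ M) : rOP U B y₀ z_d T M τ ≤ ‖U T y₀ - z_d‖ := by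
  simpa [stateT_eq_add_inputMap, inputMap_zero] using
    rOP_le (U := U) (B := B) (y₀ := y₀) (z_d := z_d) (zero_mem_UadmSet (τ := τ) (T := T) hM)

lemma rOP_zero (hU : IsUnitaryGroup U) (hB : IsOrthProj B) (hτT : τ ≤ T) :
    rOP U B y₀ z_d T 0 τ = ‖U T y₀ - z_d‖ := by
  refine le_antisymm (rOP_le_norm le_rfl) (le_rOP le_rfl fun u hu => ?_)
  have h : inputMap U B T τ u = 0 :=
    norm_le_zero_iff.1 (by simpa using norm_inputMap_le hU hB hτT hu.2)
  rw [stateT_eq_add_inputMap, h, add_zero]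

lemma rOP_le_rOP_add_mul (hU : IsUnitaryGroup U) (hB : IsOrthProj B) (hτT : τ ≤ T)
    (hM₂ : 0 ≤ M₂) (h : M₂ ≤ M₁) :
    rOP U B y₀ z_d T M₂ τ ≤ rOP U B y₀ z_d T M₁ τ + (T - τ) * (M₁ - M₂) := by
  have hM₁ := hM₂.trans h
  set c := M₂ / M₁
  have hcM : c * M₁ = M₂ := div_mul_cancel_of_imp fun h0 => le_antisymm (h0 ▸ h) hM₂
  have hc0 : 0 ≤ c := div_nonneg hM₂ hM₁
  have hc1 : c ≤ 1 := div_le_one_of_le₀ h hM₁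
  rw [← sub_le_iff_le_add]
  refine le_rOP hM₁ fun u hu => ?_
  have hcu : c • u ∈ UadmSet M₂ τ T := hcM ▸ smul_mem_UadmSet hc0 hu
  have hmove : ‖stateT U B T τ (c • u) y₀ - stateT U B T τ u y₀‖ ≤ (T - τ) * (M₁ - M₂) := by
    have h1 : c • inputMap U B T τ u - inputMap U B T τ u = (c - 1) • inputMap U B T τ u := by
      rw [sub_smul, one_smul]
    rw [stateT_eq_add_inputMap, stateT_eq_add_inputMap, inputMap_smul, add_sub_add_left_eq_sub,
      h1, norm_smul, Real.norm_of_nonpos (by linarith), neg_sub]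
    calc (1 - c) * ‖inputMap U B T τ u‖ ≤ (1 - c) * ((T - τ) * M₁) :=
          mul_le_mul_of_nonneg_left (norm_inputMap_le hU hB hτT hu.2) (sub_nonneg.2 hc1)
      _ = (T - τ) * (M₁ - M₂) := by rw [← hcM]; ring
  linarith [rOP_le (U := U) (B := B) (y₀ := y₀) (z_d := z_d) hcu,
    norm_sub_le_norm_sub_add_norm_sub (stateT U B T τ (c • u) y₀) (stateT U B T τ u y₀) z_d]

lemma abs_rOP_sub_le (hU : IsUnitaryGroup U) (hB : IsOrthProj B) (hτT : τ ≤ T)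
    (hM₁ : 0 ≤ M₁) (hM₂ : 0 ≤ M₂) :
    |rOP U B y₀ z_d T M₁ τ - rOP U B y₀ z_d T M₂ τ| ≤ (T - τ) * |M₁ - M₂| := by
  wlog h : M₂ ≤ M₁ generalizing M₁ M₂
  · rw [abs_sub_comm, abs_sub_comm M₁]
    exact this hM₂ hM₁ (le_of_not_ge h)
  rw [abs_of_nonpos (sub_nonpos.2 (rOP_anti hM₂ h)), abs_of_nonneg (sub_nonneg.2 h), neg_sub]
  linarith [rOP_le_rOP_add_mul (y₀ := y₀) (z_d := z_d) hU hB hτT hM₂ h]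

end OptimalTarget

section ExactControllability

variable {E : Type*} [NormedAddCommGroup E] [InnerProductSpace ℂ E]
  {U : ℝ → E →L[ℂ] E} {B : E →L[ℂ] E} {y₀ z_d : E} {T τ M C : ℝ} {u : ℝ → E}

lemma IsControlCost.exists_stateT_eq_add (hU : IsUnitaryGroup U) (hB : IsOrthProj B)
    (hC : IsControlCost U B T τ C) (hu : u ∈ UadmSet M τ T) (z : E) :
    ∃ v ∈ UadmSet (M + C * ‖z‖) τ T, stateT U B T τ v y₀ = stateT U B T τ u y₀ + z := by
  obtain ⟨w, hw, hwC, hwz⟩ := hC z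
  refine ⟨u + w, add_mem_UadmSet hu hw hwC, ?_⟩
  rw [stateT_eq_add_inputMap, stateT_eq_add_inputMap,
    inputMap_add (integrableOn_inputIntegrand hU hB hu.1.1 hu.2)
      (integrableOn_inputIntegrand hU hB hw (hwC.mono fun _ ht _ => ht)), hwz, add_assoc]

lemma Mtau_nonneg : 0 ≤ Mtau U B y₀ z_d T τ :=
  Real.sInf_nonneg (by rintro _ ⟨v, -, rfl⟩; exact supNorm_nonneg)

lemma Mtau_le_supNorm (hu : MemLinfty u 0 T) (hz : stateT U B T τ u y₀ = z_d) :
    Mtau U B y₀ z_d T τ ≤ supNorm u τ T :=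
  csInf_le ⟨0, by rintro _ ⟨v, -, rfl⟩; exact supNorm_nonneg⟩ ⟨u, ⟨hu, hz⟩, rfl⟩

lemma Mtau_le_add_mul_rOP (hU : IsUnitaryGroup U) (hB : IsOrthProj B)
    (hC : IsControlCost U B T τ C) (hC0 : 0 < C) (hM : 0 ≤ M) :
    Mtau U B y₀ z_d T τ ≤ M + C * rOP U B y₀ z_d T M τ := by
  have h : (Mtau U B y₀ z_d T τ - M) / C ≤ rOP U B y₀ z_d T M τ := le_rOP hM fun u hu => by
    obtain ⟨v, hv, hvz⟩ := hC.exists_stateT_eq_add (y₀ := y₀) hU hB hu (z_d - stateT U B T τ u y₀)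
    rw [add_sub_cancel] at hvz
    have := (Mtau_le_supNorm hv.1 hvz).trans (supNorm_le (by positivity) hv.2)
    rw [div_le_iff₀ hC0, norm_sub_rev]
    linarith
  rw [div_le_iff₀ hC0] at h
  linarith

lemma rOP_pos (hU : IsUnitaryGroup U) (hB : IsOrthProj B) (hC : IsControlCost U B T τ C)
    (hC0 : 0 < C) (hM : 0 ≤ M) (hMt : M < Mtau U B y₀ z_d T τ) :
    0 < rOP U B y₀ z_d T M τ := by
  have h := Mtau_le_add_mul_rOP (y₀ := y₀) (z_d := z_d) hU hB hC hC0 hM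
  exact pos_of_mul_pos_right (by linarith) hC0.le

lemma rOP_add_mul_le (hU : IsUnitaryGroup U) (hB : IsOrthProj B) (hC : IsControlCost U B T τ C)
    (hu : u ∈ UadmSet M τ T) {θ : ℝ} (hθ0 : 0 ≤ θ) (hθ1 : θ ≤ 1) :
    rOP U B y₀ z_d T (M + C * (θ * ‖stateT U B T τ u y₀ - z_d‖)) τ ≤
      (1 - θ) * ‖stateT U B T τ u y₀ - z_d‖ := by
  obtain ⟨v, hv, hvz⟩ := hC.exists_stateT_eq_add (y₀ := y₀) hU hB hu
    (θ • (z_d - stateT U B T τ u y₀))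
  rw [norm_smul, Real.norm_of_nonneg hθ0, norm_sub_rev] at hv
  calc _ ≤ ‖stateT U B T τ v y₀ - z_d‖ := rOP_le hv
    _ = ‖(1 - θ) • (stateT U B T τ u y₀ - z_d)‖ := by rw [hvz]; congr 1; module
    _ = _ := by rw [norm_smul, Real.norm_of_nonneg (sub_nonneg.2 hθ1)]

lemma rOP_add_div_le (hU : IsUnitaryGroup U) (hB : IsOrthProj B) (hC : IsControlCost U B T τ C)
    (hC0 : 0 < C) (hM : 0 ≤ M) {δ : ℝ} (hδ : 0 ≤ δ) (hpos : 0 < rOP U B y₀ z_d T (M + δ) τ) :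
    rOP U B y₀ z_d T (M + δ) τ + δ / C ≤ rOP U B y₀ z_d T M τ := by
  refine le_rOP hM fun u hu => ?_
  set d := ‖stateT U B T τ u y₀ - z_d‖
  rcases le_or_gt (C * d) δ with hCd | hCd
  · -- correcting the whole error fits in the budget `δ`, so `r(M + δ) = 0`
    have h := rOP_add_mul_le (y₀ := y₀) (z_d := z_d) hU hB hC hu zero_le_one le_rfl
    rw [one_mul, sub_self, zero_mul] at h
    exact absurd ((rOP_anti (by positivity) (by linarith)).trans h) hpos.not_ge
  · have hd : 0 < d := pos_of_mul_pos_right (hδ.trans_lt hCd) hC0.le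
    have h := rOP_add_mul_le (y₀ := y₀) (z_d := z_d) hU hB hC hu (θ := δ / (C * d)) (by positivity)
      ((div_le_one (by positivity)).2 hCd.le)
    have e1 : M + C * (δ / (C * d) * d) = M + δ := by field_simp
    have e2 : (1 - δ / (C * d)) * d = d - δ / C := by field_simp
    rw [e1, e2] at h
    linarith

lemma rOP_strictAntiOn (hU : IsUnitaryGroup U) (hB : IsOrthProj B)
    (hC : IsControlCost U B T τ C) (hC0 : 0 < C) :
    StrictAntiOn (fun M => rOP U B y₀ z_d T M τ) (Ico 0 (Mtau U B y₀ z_d T τ)) := by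
  intro M₁ hM₁ M₂ hM₂ h
  have hpos := rOP_pos hU hB hC hC0 hM₂.1 hM₂.2
  rw [← add_sub_cancel M₁ M₂] at hpos ⊢
  have := rOP_add_div_le hU hB hC hC0 hM₁.1 (sub_nonneg.2 h.le) hpos
  have := div_pos (sub_pos.2 h) hC0
  simp only
  linarith

lemma rOP_eq_zero_of_Mtau_lt (hU : IsUnitaryGroup U) (hB : IsOrthProj B)
    (hC : IsControlCost U B T τ C) (hτ : 0 ≤ τ) {N : ℝ} (hN : Mtau U B y₀ z_d T τ < N) :
    rOP U B y₀ z_d T N τ = 0 := by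
  obtain ⟨u, hu, hz⟩ : ∃ u, MemLinfty u 0 T ∧ stateT U B T τ u y₀ = z_d := by
    obtain ⟨v, hv, hvz⟩ := hC.exists_stateT_eq_add (y₀ := y₀) hU hB
      (zero_mem_UadmSet le_rfl) (z_d - stateT U B T τ 0 y₀)
    exact ⟨v, hv.1, by rw [hvz, add_sub_cancel]⟩
  obtain ⟨_, ⟨v, ⟨hv, hvz⟩, rfl⟩, hvN⟩ := exists_lt_of_csInf_lt
    (s := (fun v => supNorm v τ T) '' {v | MemLinfty v 0 T ∧ stateT U B T τ v y₀ = z_d})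
    ⟨_, u, ⟨hu, hz⟩, rfl⟩ hN
  refine le_antisymm ?_ rOP_nonneg
  simpa [hvz] using rOP_le (U := U) (B := B) (y₀ := y₀) (z_d := z_d)
    (mem_UadmSet_of_supNorm_lt hτ hv hvN)

lemma rOP_le_mul_Mtau_sub (hU : IsUnitaryGroup U) (hB : IsOrthProj B)
    (hC : IsControlCost U B T τ C) (hτ : 0 ≤ τ) (hτT : τ ≤ T) (hM : 0 ≤ M)
    (hMt : M ≤ Mtau U B y₀ z_d T τ) :
    rOP U B y₀ z_d T M τ ≤ (T - τ) * (Mtau U B y₀ z_d T τ - M) := by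
  refine ge_of_tendsto (f := fun N => (T - τ) * (N - M)) (x := 𝓝[>] Mtau U B y₀ z_d T τ)
    ((Continuous.tendsto (by fun_prop) _).mono_left nhdsWithin_le_nhds) ?_
  filter_upwards [self_mem_nhdsWithin] with N hN
  have h := rOP_le_rOP_add_mul (y₀ := y₀) (z_d := z_d) hU hB hτT hM (hMt.trans (le_of_lt hN))
  rwa [rOP_eq_zero_of_Mtau_lt hU hB hC hτ hN, zero_add] at h

lemma Mtau_pos (hU : IsUnitaryGroup U) (hB : IsOrthProj B) (hC : IsControlCost U B T τ C)
    (hτ : 0 ≤ τ) (hτT : τ ≤ T) (hr : 0 < ‖U T y₀ - z_d‖) :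
    0 < Mtau U B y₀ z_d T τ := by
  have h := rOP_le_mul_Mtau_sub (y₀ := y₀) (z_d := z_d) hU hB hC hτ hτT le_rfl Mtau_nonneg
  rw [rOP_zero hU hB hτT, sub_zero] at h
  exact pos_of_mul_pos_right (hr.trans_le h) (sub_nonneg.2 hτT)

lemma tendsto_rOP_Mtau (hU : IsUnitaryGroup U) (hB : IsOrthProj B)
    (hC : IsControlCost U B T τ C) (hτ : 0 ≤ τ) (hτT : τ ≤ T) (hr : 0 < ‖U T y₀ - z_d‖) :
    Tendsto (fun M => rOP U B y₀ z_d T M τ) (𝓝[<] (Mtau U B y₀ z_d T τ)) (𝓝 0) := by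
  set Mt := Mtau U B y₀ z_d T τ
  have hlim : Tendsto (fun M => (T - τ) * (Mt - M)) (𝓝[<] Mt) (𝓝 0) := by
    have h : Tendsto (fun M => (T - τ) * (Mt - M)) (𝓝 Mt) (𝓝 ((T - τ) * (Mt - Mt))) :=
      Continuous.tendsto (by fun_prop) _
    simpa using h.mono_left nhdsWithin_le_nhds
  refine tendsto_of_tendsto_of_tendsto_of_le_of_le' tendsto_const_nhds hlim
    (Eventually.of_forall fun _ => rOP_nonneg) ?_
  filter_upwards [Ioo_mem_nhdsLT (Mtau_pos hU hB hC hτ hτT hr)] with M hM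
  exact rOP_le_mul_Mtau_sub hU hB hC hτ hτT hM.1.le hM.2.le

end ExactControllability

theorem rop_map_properties_general
    (U : ℝ → H →L[ℂ] H) (B : H →L[ℂ] H) (hU : IsUnitaryGroup U) (hB : IsOrthProj B)
    (hEC : EC U B)
    (T : ℝ) (y₀ z_d : H) (hrT : 0 < ‖U T y₀ - z_d‖)
    (τ : ℝ) (hτ : τ ∈ Ico (0 : ℝ) T) :
    (∀ M ∈ Ico (0 : ℝ) (Mtau U B y₀ z_d T τ),
      rOP U B y₀ z_d T M τ ∈ Ioc (0 : ℝ) ‖U T y₀ - z_d‖) ∧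
    StrictAntiOn (fun M => rOP U B y₀ z_d T M τ) (Ico (0 : ℝ) (Mtau U B y₀ z_d T τ)) ∧
    (∀ M₁ ∈ Ico (0 : ℝ) (Mtau U B y₀ z_d T τ), ∀ M₂ ∈ Ico (0 : ℝ) (Mtau U B y₀ z_d T τ),
      |rOP U B y₀ z_d T M₁ τ - rOP U B y₀ z_d T M₂ τ| ≤ (T - τ) * |M₁ - M₂|) ∧
    rOP U B y₀ z_d T 0 τ = ‖U T y₀ - z_d‖ ∧
    Tendsto (fun M => rOP U B y₀ z_d T M τ) (𝓝[<] (Mtau U B y₀ z_d T τ)) (𝓝 0) := by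
  obtain ⟨hτ0, hτT⟩ := hτ
  obtain ⟨C, hC0, hC⟩ := hEC.exists_isControlCost hτT
  exact ⟨fun M hM => ⟨rOP_pos hU hB hC hC0 hM.1 hM.2, rOP_le_norm hM.1⟩,
    rOP_strictAntiOn hU hB hC hC0,
    fun M₁ hM₁ M₂ hM₂ => abs_rOP_sub_le hU hB hτT.le hM₁.1 hM₂.1,
    rOP_zero hU hB hτT.le,
    tendsto_rOP_Mtau hU hB hC hτ0 hτT.le hrT⟩

theorem rop_map_properties
    (U : ℝ → H →L[ℂ] H) (B : H →L[ℂ] H) (hU : IsUnitaryGroup U) (hB : IsOrthProj B)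
    (hEC : EC U B) (hECrev : EC (fun t => U (-t)) B)
    (hUC : UC U B)
    (T : ℝ) (hT : 0 < T) (y₀ z_d : H) (hrT : 0 < ‖U T y₀ - z_d‖)
    (τ : ℝ) (hτ : τ ∈ Ico (0 : ℝ) T) :
    (∀ M ∈ Ico (0 : ℝ) (Mtau U B y₀ z_d T τ),
      rOP U B y₀ z_d T M τ ∈ Ioc (0 : ℝ) ‖U T y₀ - z_d‖) ∧
    StrictAntiOn (fun M => rOP U B y₀ z_d T M τ) (Ico (0 : ℝ) (Mtau U B y₀ z_d T τ)) ∧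
    (∀ M₁ ∈ Ico (0 : ℝ) (Mtau U B y₀ z_d T τ), ∀ M₂ ∈ Ico (0 : ℝ) (Mtau U B y₀ z_d T τ),
      |rOP U B y₀ z_d T M₁ τ - rOP U B y₀ z_d T M₂ τ| ≤ (T - τ) * |M₁ - M₂|) ∧
    rOP U B y₀ z_d T 0 τ = ‖U T y₀ - z_d‖ ∧
    Tendsto (fun M => rOP U B y₀ z_d T M τ) (𝓝[<] (Mtau U B y₀ z_d T τ)) (𝓝 0) :=
  rop_map_properties_general U B hU hB hEC T y₀ z_d hrT τ hτ
end
end
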